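/- Let P be a partition in a set A and B, C ⊆ R(P) with B ∩ C = ∅ and R_{P,B} ∩ C = ∅. Then the disjoint union (P/P_(B))_(C) ∪ P_(B) (the trivial insertion of P_(B) into (P/P_(B))_(C)) equals P_(B∪C), and (P/P_(C)) / (P/P_(C))_(B) = (P/P_(B)) / ((P_(B∪C)/(P_(B∪C))_(B))), where P_(B∪C)/(P_(B∪C))_(B) coincides with the restriction of P/P_(B) to C. -/
import Mathlib


namespace PartitionOps

variable {α : Type*} [DecidableEq α]

/-- The support `R(P)` of a collection of finite sets: the union of its members. -/
def supp (P : Finset (Finset α)) : Finset α := P.sup id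

/-- A partition in `A`: a finite collection of pairwise disjoint nonempty finite sets. -/
def IsPartition (P : Finset (Finset α)) : Prop :=
  (∀ I ∈ P, I.Nonempty) ∧ ∀ I ∈ P, ∀ I' ∈ P, I ≠ I' → Disjoint I I'

/-- The restriction `P_(B) = { I ∩ B : I ∈ P, I ∩ B ≠ ∅ }`. -/
def restrict (P : Finset (Finset α)) (B : Finset α) : Finset (Finset α) :=
  (P.filter fun I => (I ∩ B).Nonempty).image (· ∩ B)

/-- `R_{P,B}`: the union of the members of `P` meeting `B`. -/
def RB (P : Finset (Finset α)) (B : Finset α) : Finset α :=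
  (P.filter fun I => (I ∩ B).Nonempty).sup id

/-- The quotient `P / P_(B)`: the members of `P` disjoint from `B`, together with
`R_{P,B} \ B` (omitted when empty). -/
def quot (P : Finset (Finset α)) (B : Finset α) : Finset (Finset α) :=
  (insert (RB P B \ B) (P.filter fun I => I ∩ B = ∅)).erase ∅

/-- Quotient of `P` by a partition `Q` (meaningful when `Q` coincides with the
restriction of `P` to the support of `Q`): `P / Q := P / P_(R(Q))`. -/
def quotBy (P Q : Finset (Finset α)) : Finset (Finset α) := quot P (supp Q)

lemma mem_restrict {P : Finset (Finset α)} {B J : Finset α} :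
    J ∈ restrict P B ↔ ∃ I ∈ P, (I ∩ B).Nonempty ∧ I ∩ B = J := by
  simp [restrict]; tauto

lemma mem_quot {P : Finset (Finset α)} {B J : Finset α} :
    J ∈ quot P B ↔ J ≠ ∅ ∧ (J = RB P B \ B ∨ (J ∈ P ∧ J ∩ B = ∅)) := by
  simp [quot, Finset.mem_erase, Finset.mem_insert, Finset.mem_filter]

lemma mem_RB {P : Finset (Finset α)} {B : Finset α} {x : α} :
    x ∈ RB P B ↔ ∃ I ∈ P, (I ∩ B).Nonempty ∧ x ∈ I := by
  simp [RB, Finset.mem_sup]; tauto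

lemma mem_supp {P : Finset (Finset α)} {x : α} :
    x ∈ supp P ↔ ∃ I ∈ P, x ∈ I := by
  simp [supp, Finset.mem_sup]

lemma supp_restrict {P : Finset (Finset α)} {C : Finset α} (hC : C ⊆ supp P) :
    supp (restrict P C) = C := by
  ext x
  simp only [mem_supp, mem_restrict]
  constructor
  · rintro ⟨J, ⟨I, hI, hne, rfl⟩, hx⟩
    exact (Finset.mem_inter.mp hx).2
  · intro hx
    obtain ⟨I, hI, hxI⟩ := mem_supp.mp (hC hx)
    exact ⟨I ∩ C, ⟨I, hI, ⟨x, Finset.mem_inter.mpr ⟨hxI, hx⟩⟩, rfl⟩,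
      Finset.mem_inter.mpr ⟨hxI, hx⟩⟩

lemma RB_quot {P : Finset (Finset α)} {B C : Finset α}
    (hbc : ∀ I ∈ P, (I ∩ B).Nonempty → I ∩ C = ∅)
    (hRCB : Disjoint (RB P C) B) :
    RB (quot P C) B = RB P B := by
  ext x
  simp only [mem_RB, mem_quot]
  constructor
  · rintro ⟨X, ⟨hXne, hX⟩, hXB, hxX⟩
    rcases hX with rfl | ⟨hXP, _⟩
    · obtain ⟨y, hy⟩ := hXB
      simp only [Finset.mem_inter, Finset.mem_sdiff] at hy
      exact absurd hy.2 (Finset.disjoint_left.mp hRCB hy.1.1)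
    · exact ⟨X, hXP, hXB, hxX⟩
  · rintro ⟨I, hIP, hIB, hxI⟩
    refine ⟨I, ⟨?_, Or.inr ⟨hIP, hbc I hIP hIB⟩⟩, hIB, hxI⟩
    obtain ⟨y, hy⟩ := hIB
    exact Finset.ne_empty_of_mem (Finset.mem_inter.mp hy).1

lemma quot_quot_char {P : Finset (Finset α)} {B C J : Finset α}
    (hbc : ∀ I ∈ P, (I ∩ B).Nonempty → I ∩ C = ∅)
    (hRCB : Disjoint (RB P C) B) :
    J ∈ quot (quot P C) B ↔ J ≠ ∅ ∧
      (J = RB P B \ B ∨ J = RB P C \ C ∨ (J ∈ P ∧ J ∩ B = ∅ ∧ J ∩ C = ∅)) := by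
  rw [mem_quot, RB_quot hbc hRCB]
  simp only [mem_quot]
  constructor
  · rintro ⟨hne, h | ⟨⟨-, h⟩, hJB⟩⟩
    · exact ⟨hne, Or.inl h⟩
    · rcases h with rfl | ⟨hJP, hJC⟩
      · exact ⟨hne, Or.inr (Or.inl rfl)⟩
      · exact ⟨hne, Or.inr (Or.inr ⟨hJP, hJB, hJC⟩)⟩
  · rintro ⟨hne, h | h | ⟨hJP, hJB, hJC⟩⟩
    · exact ⟨hne, Or.inl h⟩
    · refine ⟨hne, Or.inr ⟨⟨hne, Or.inl h⟩, ?_⟩⟩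
      subst h
      exact Finset.disjoint_iff_inter_eq_empty.mp
        (Finset.disjoint_of_subset_left Finset.sdiff_subset hRCB)
    · exact ⟨hne, Or.inr ⟨⟨hne, Or.inr ⟨hJP, hJC⟩⟩, hJB⟩⟩

/-- if `B ∩ C = ∅` and `R_{P,B} ∩ C = ∅`, then the disjoint union
`(P/P_(B))_(C) ∪ P_(B)` (the trivial insertion of `P_(B)` into `(P/P_(B))_(C)`)
equals `P_(B∪C)`, and
`(P/P_(C)) / (P/P_(C))_(B) = (P/P_(B)) / (P_(B∪C)/(P_(B∪C))_(B))`, where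
`P_(B∪C)/(P_(B∪C))_(B)` coincides with the restriction of `P/P_(B)` to `C`. -/
theorem trivial_ins_case (P : Finset (Finset α)) (hP : IsPartition P)
    (B C : Finset α) (hB : B ⊆ supp P) (hC : C ⊆ supp P) (hBC : Disjoint B C)
    (hR : Disjoint (RB P B) C) :
    Disjoint (restrict (quot P B) C) (restrict P B) ∧
      restrict (quot P B) C ∪ restrict P B = restrict P (B ∪ C) ∧
      quot (restrict P (B ∪ C)) B = restrict (quot P B) C ∧
      quot (quot P C) B = quotBy (quot P B) (quot (restrict P (B ∪ C)) B) := by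
  -- key pointwise facts
  have hbc : ∀ I ∈ P, (I ∩ B).Nonempty → I ∩ C = ∅ := by
    intro I hI hIB
    have hsub : I ⊆ RB P B := by
      have : I ∈ P.filter fun I => (I ∩ B).Nonempty := Finset.mem_filter.mpr ⟨hI, hIB⟩
      exact Finset.le_sup (f := id) this
    exact Finset.disjoint_iff_inter_eq_empty.mp
      (Finset.disjoint_of_subset_left hsub hR)
  have hcb : ∀ I ∈ P, (I ∩ C).Nonempty → I ∩ B = ∅ := by
    intro I hI hIC
    by_contra h
    have hIB : (I ∩ B).Nonempty := Finset.nonempty_iff_ne_empty.mpr h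
    rw [hbc I hI hIB] at hIC
    exact hIC.ne_empty rfl
  have hRCB : Disjoint (RB P C) B := by
    rw [Finset.disjoint_left]
    intro x hx hxB
    obtain ⟨I, hI, hIC, hxI⟩ := mem_RB.mp hx
    have := hcb I hI hIC
    have : x ∈ I ∩ B := Finset.mem_inter.mpr ⟨hxI, hxB⟩
    rw [hcb I hI hIC] at *
    exact absurd (Finset.mem_inter.mpr ⟨hxI, hxB⟩) (by rw [hcb I hI hIC]; exact Finset.notMem_empty x)
  -- restrict (quot P B) C = restrict P C
  have hRQ : restrict (quot P B) C = restrict P C := by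
    ext J
    simp only [mem_restrict, mem_quot]
    constructor
    · rintro ⟨I, ⟨hne, h⟩, hJne, rfl⟩
      rcases h with rfl | ⟨hIP, hIB⟩
      · obtain ⟨y, hy⟩ := hJne
        simp only [Finset.mem_inter, Finset.mem_sdiff] at hy
        exact absurd hy.2 (Finset.disjoint_left.mp hR hy.1.1)
      · exact ⟨I, hIP, hJne, rfl⟩
    · rintro ⟨I, hIP, hJne, rfl⟩
      refine ⟨I, ⟨?_, Or.inr ⟨hIP, hcb I hIP hJne⟩⟩, hJne, rfl⟩
      exact Finset.nonempty_iff_ne_empty.mp (hP.1 I hIP)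
  -- restrict P C ∪ restrict P B = restrict P (B ∪ C)
  have hUnion : restrict P C ∪ restrict P B = restrict P (B ∪ C) := by
    ext J
    simp only [Finset.mem_union, mem_restrict]
    constructor
    · rintro (⟨I, hIP, hne, rfl⟩ | ⟨I, hIP, hne, rfl⟩)
      · have hIB := hcb I hIP hne
        refine ⟨I, hIP, ?_, ?_⟩ <;>
          rw [Finset.inter_union_distrib_left, hIB, Finset.empty_union]
        exact hne
      · have hIC := hbc I hIP hne
        refine ⟨I, hIP, ?_, ?_⟩ <;>
          rw [Finset.inter_union_distrib_left, hIC, Finset.union_empty]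
        exact hne
    · rintro ⟨I, hIP, hne, rfl⟩
      rw [Finset.inter_union_distrib_left] at hne ⊢
      by_cases hIB : (I ∩ B).Nonempty
      · right
        refine ⟨I, hIP, hIB, ?_⟩
        rw [hbc I hIP hIB, Finset.union_empty]
      · left
        have hIBe : I ∩ B = ∅ := Finset.not_nonempty_iff_eq_empty.mp hIB
        rw [hIBe, Finset.empty_union] at hne ⊢
        exact ⟨I, hIP, hne, rfl⟩
  -- part 1: disjointness
  have part1 : Disjoint (restrict (quot P B) C) (restrict P B) := by
    rw [Finset.disjoint_left]
    intro J hJ hJ'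
    obtain ⟨I, _, hne, rfl⟩ := mem_restrict.mp hJ
    obtain ⟨I', _, hne', heq⟩ := mem_restrict.mp hJ'
    obtain ⟨x, hx⟩ := hne
    have hxC := (Finset.mem_inter.mp hx).2
    have hxB : x ∈ B := by
      have : x ∈ I' ∩ B := heq ▸ hx
      exact (Finset.mem_inter.mp this).2
    exact Finset.disjoint_left.mp hBC hxB hxC
  -- part 3: quot (restrict P (B ∪ C)) B = restrict P C
  have part3 : quot (restrict P (B ∪ C)) B = restrict P C := by
    have hRBsub : RB (restrict P (B ∪ C)) B ⊆ B := by
      intro x hx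
      obtain ⟨J, hJ, hJB, hxJ⟩ := mem_RB.mp hx
      rw [← hUnion, Finset.mem_union] at hJ
      rcases hJ with hJ | hJ
      · obtain ⟨I, hIP, hne, rfl⟩ := mem_restrict.mp hJ
        obtain ⟨y, hy⟩ := hJB
        simp only [Finset.mem_inter] at hy
        exact absurd hy.2 (Finset.disjoint_left.mp hBC.symm hy.1.2)
      · obtain ⟨I, hIP, hne, rfl⟩ := mem_restrict.mp hJ
        exact (Finset.mem_inter.mp hxJ).2
    have hRBe : RB (restrict P (B ∪ C)) B \ B = ∅ :=
      Finset.sdiff_eq_empty_iff_subset.mpr hRBsub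
    ext J
    simp only [mem_quot, hRBe, mem_restrict]
    constructor
    · rintro ⟨hne, h | ⟨⟨I, hIP, hIne, rfl⟩, hJB⟩⟩
      · exact absurd h hne
      · by_cases hIB : (I ∩ B).Nonempty
        · exfalso
          rw [Finset.inter_union_distrib_left, hbc I hIP hIB, Finset.union_empty,
            Finset.inter_assoc, Finset.inter_self] at hJB
          exact hIB.ne_empty hJB
        · have hIBe := Finset.not_nonempty_iff_eq_empty.mp hIB
          refine ⟨I, hIP, ?_, ?_⟩
          · rw [Finset.inter_union_distrib_left, hIBe, Finset.empty_union] at hIne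
            exact hIne
          · rw [Finset.inter_union_distrib_left, hIBe, Finset.empty_union]
    · rintro ⟨I, hIP, hne, rfl⟩
      have hICB : (I ∩ C) ∩ B = ∅ := by
        rw [Finset.inter_assoc, Finset.disjoint_iff_inter_eq_empty.mp hBC.symm,
          Finset.inter_empty]
      have hIB := hcb I hIP hne
      refine ⟨hne.ne_empty, Or.inr ⟨⟨I, hIP, ?_, ?_⟩, hICB⟩⟩
      · rw [Finset.inter_union_distrib_left, hIB, Finset.empty_union]
        exact hne
      · rw [Finset.inter_union_distrib_left, hIB, Finset.empty_union]
  -- part 4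
  have hsuppC : supp (restrict P C) = C := supp_restrict hC
  have part4 : quot (quot P C) B = quotBy (quot P B) (quot (restrict P (B ∪ C)) B) := by
    rw [quotBy, part3, hsuppC]
    ext J
    rw [quot_quot_char hbc hRCB, quot_quot_char hcb hR]
    tauto
  exact ⟨part1, by rw [hRQ, hUnion], by rw [part3, hRQ], part4⟩

end PartitionOps
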